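/- For every p > 1, the generalized hyperbolic sine function sinh_p is differentiable at every point x > 0, with derivative sinh_p'(x) = cosh_p(x) = (1 + sinh_p(x)^p)^(1/p); consequently |cosh_p(x)|^p − |sinh_p(x)|^p = 1 for all x ≥ 0. -/

import Mathlib

open Real Set Filter Topology

/-- Generalized inverse sine: `arcsinp p x = ∫₀ˣ (1 - tᵖ)^(-1/p) dt`. -/
noncomputable def arcsinp (p x : ℝ) : ℝ := ∫ t in (0:ℝ)..x, (1 - t ^ p) ^ (-(1/p))

/-- The generalized half-pi: `π_p/2 = arcsin_p 1`. -/
noncomputable def pipHalf (p : ℝ) : ℝ := arcsinp p 1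

/-- Generalized sine: the inverse of `arcsinp p` viewed as a map on `[0,1]`. -/
noncomputable def sinp (p : ℝ) : ℝ → ℝ := Function.invFunOn (arcsinp p) (Set.Icc 0 1)

/-- Generalized cosine. -/
noncomputable def cosp (p x : ℝ) : ℝ := (1 - (sinp p x) ^ p) ^ (1/p : ℝ)

/-- Generalized tangent. -/
noncomputable def tanp (p x : ℝ) : ℝ := sinp p x / cosp p x

/-- Generalized inverse hyperbolic sine: `arsinhp p x = ∫₀ˣ (1 + tᵖ)^(-1/p) dt`. -/
noncomputable def arsinhp (p x : ℝ) : ℝ := ∫ t in (0:ℝ)..x, (1 + t ^ p) ^ (-(1/p))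

/-- Generalized hyperbolic sine: the inverse of `arsinhp p` viewed as a map on `[0,∞)`. -/
noncomputable def sinhp (p : ℝ) : ℝ → ℝ := Function.invFunOn (arsinhp p) (Set.Ici 0)

/-- Generalized hyperbolic cosine. -/
noncomputable def coshp (p x : ℝ) : ℝ := (1 + (sinhp p x) ^ p) ^ (1/p : ℝ)

/-- Generalized hyperbolic tangent. -/
noncomputable def tanhp (p x : ℝ) : ℝ := sinhp p x / coshp p x

/-!
On `[0, ∞)` the integrand of `arsinhp p` is positive and continuous, so `arsinhp p` is a
continuous strictly increasing function with `arsinhp p 0 = 0`. For `p ≥ 1` we have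
`1 + tᵖ ≤ (1 + t)ᵖ`, so the integrand dominates `(1 + t)⁻¹` and `arsinhp p x ≥ log (1 + x)`;
hence `arsinhp p` is a bijection of `[0, ∞)`. Its inverse `sinhp p` is monotone with an
interval as image, hence continuous, and the inverse function theorem gives
`sinhp p' = ((1 + sinhp pᵖ)^(-1/p))⁻¹ = coshp p`. Finally `coshp pᵖ = 1 + sinhp pᵖ`.
-/

open MeasureTheory

section Arsinhp

variable {p : ℝ}

lemma continuousOn_arsinhp_integrand (hp : 0 ≤ p) :
    ContinuousOn (fun t : ℝ => (1 + t ^ p) ^ (-(1/p))) (Ici 0) := fun t ht =>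
  ((continuousAt_const.add (continuousAt_rpow_const t p (Or.inr hp))).rpow_const
    (Or.inl (by have : (0 : ℝ) ≤ t := ht; show 1 + t ^ p ≠ 0; positivity))).continuousWithinAt

lemma intervalIntegrable_arsinhp_integrand (hp : 0 ≤ p) {a b : ℝ} (ha : 0 ≤ a) (hb : 0 ≤ b) :
    IntervalIntegrable (fun t : ℝ => (1 + t ^ p) ^ (-(1/p))) volume a b :=
  ContinuousOn.intervalIntegrable <|
    (continuousOn_arsinhp_integrand hp).mono fun _ ht => (le_inf ha hb).trans ht.1

lemma arsinhp_zero : arsinhp p 0 = 0 := intervalIntegral.integral_same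

lemma arsinhp_strictMonoOn (hp : 0 ≤ p) : StrictMonoOn (arsinhp p) (Ici 0) := by
  intro a ha b hb hab
  have hpos : 0 < ∫ t in a..b, (1 + t ^ p) ^ (-(1/p)) :=
    intervalIntegral.intervalIntegral_pos_of_pos_on
      (intervalIntegrable_arsinhp_integrand hp ha hb)
      (fun t ht => by have : (0 : ℝ) ≤ t := le_trans ha ht.1.le; positivity) hab
  rw [arsinhp, arsinhp, ← intervalIntegral.integral_add_adjacent_intervals
    (intervalIntegrable_arsinhp_integrand hp le_rfl ha)
    (intervalIntegrable_arsinhp_integrand hp ha hb)]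
  exact lt_add_of_pos_right _ hpos

lemma arsinhp_nonneg (hp : 0 ≤ p) {x : ℝ} (hx : 0 ≤ x) : 0 ≤ arsinhp p x :=
  arsinhp_zero (p := p) ▸ (arsinhp_strictMonoOn hp).monotoneOn self_mem_Ici hx hx

lemma continuousOn_arsinhp (hp : 0 ≤ p) {b : ℝ} (hb : 0 ≤ b) :
    ContinuousOn (arsinhp p) (Icc 0 b) := by
  rw [← uIcc_of_le hb]
  exact intervalIntegral.continuousOn_primitive_interval <| ContinuousOn.integrableOn_uIcc <|
    (continuousOn_arsinhp_integrand hp).mono fun _ ht => (le_inf le_rfl hb).trans ht.1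

lemma hasDerivAt_arsinhp (hp : 0 ≤ p) {x : ℝ} (hx : 0 < x) :
    HasDerivAt (arsinhp p) ((1 + x ^ p) ^ (-(1/p))) x :=
  have hcont := (continuousOn_arsinhp_integrand hp).mono Ioi_subset_Ici_self
  intervalIntegral.integral_hasDerivAt_right (intervalIntegrable_arsinhp_integrand hp le_rfl hx.le)
    (hcont.stronglyMeasurableAtFilter isOpen_Ioi x hx) (hcont.continuousAt (Ioi_mem_nhds hx))

lemma inv_one_add_le_arsinhp_integrand (hp : 1 ≤ p) {t : ℝ} (ht : 0 ≤ t) :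
    (1 + t)⁻¹ ≤ (1 + t ^ p) ^ (-(1/p)) :=
  calc (1 + t)⁻¹ = ((1 + t) ^ p) ^ (-(1/p)) := by
        rw [← rpow_mul (by positivity), mul_neg, mul_one_div_cancel (by positivity), rpow_neg_one]
    _ ≤ (1 + t ^ p) ^ (-(1/p)) := by
        refine rpow_le_rpow_of_nonpos (by positivity) ?_ (neg_nonpos.2 (by positivity))
        simpa using add_rpow_le_rpow_add zero_le_one ht hp

lemma log_one_add_le_arsinhp (hp : 1 ≤ p) {x : ℝ} (hx : 0 ≤ x) :
    log (1 + x) ≤ arsinhp p x := by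
  have hlog : ∫ t in (0:ℝ)..x, (1 + t)⁻¹ = log (1 + x) := by
    rw [intervalIntegral.integral_comp_add_left (fun t => t⁻¹), add_zero,
      integral_inv_of_pos one_pos (by linarith), div_one]
  rw [← hlog]
  refine intervalIntegral.integral_mono_on hx ?_
    (intervalIntegrable_arsinhp_integrand (zero_le_one.trans hp) le_rfl hx)
    fun t ht => inv_one_add_le_arsinhp_integrand hp ht.1
  exact ContinuousOn.intervalIntegrable fun t ht =>
    (continuousWithinAt_const.add continuousWithinAt_id).inv₀
      (by have : (0 : ℝ) ≤ t := (le_inf le_rfl hx).trans ht.1; show 1 + t ≠ 0; positivity)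

lemma arsinhp_surjOn (hp : 1 ≤ p) : SurjOn (arsinhp p) (Ici 0) (Ici 0) := by
  intro y (hy : 0 ≤ y)
  have hX : 0 ≤ exp y - 1 := sub_nonneg.2 (one_le_exp hy)
  have hyX : y ≤ arsinhp p (exp y - 1) := by
    simpa using log_one_add_le_arsinhp hp hX
  obtain ⟨s, hs, hsy⟩ := intermediate_value_Icc hX
    (continuousOn_arsinhp (zero_le_one.trans hp) hX) ⟨by rwa [arsinhp_zero], hyX⟩
  exact ⟨s, hs.1, hsy⟩

lemma arsinhp_bijOn (hp : 1 ≤ p) : BijOn (arsinhp p) (Ici 0) (Ici 0) :=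
  ⟨fun _ hx => arsinhp_nonneg (zero_le_one.trans hp) hx,
    (arsinhp_strictMonoOn (zero_le_one.trans hp)).injOn, arsinhp_surjOn hp⟩

end Arsinhp

section Sinhp

variable {p : ℝ}

lemma sinhp_invOn (hp : 1 ≤ p) : InvOn (sinhp p) (arsinhp p) (Ici 0) (Ici 0) :=
  (arsinhp_bijOn hp).invOn_invFunOn

lemma sinhp_bijOn (hp : 1 ≤ p) : BijOn (sinhp p) (Ici 0) (Ici 0) :=
  (arsinhp_bijOn hp).symm (sinhp_invOn hp).symm

lemma sinhp_nonneg (hp : 1 ≤ p) {x : ℝ} (hx : 0 ≤ x) : 0 ≤ sinhp p x :=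
  (sinhp_bijOn hp).mapsTo hx

lemma arsinhp_sinhp (hp : 1 ≤ p) {x : ℝ} (hx : 0 ≤ x) : arsinhp p (sinhp p x) = x :=
  (sinhp_invOn hp).2 hx

lemma sinhp_pos (hp : 1 ≤ p) {x : ℝ} (hx : 0 < x) : 0 < sinhp p x := by
  refine (sinhp_nonneg hp hx.le).lt_of_ne fun h => hx.ne ?_
  rw [← arsinhp_sinhp hp hx.le, ← h, arsinhp_zero]

lemma sinhp_monotoneOn (hp : 1 ≤ p) : MonotoneOn (sinhp p) (Ici 0) := fun a ha b hb hab => by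
  rwa [← (arsinhp_strictMonoOn (zero_le_one.trans hp)).le_iff_le ((sinhp_bijOn hp).mapsTo ha)
    ((sinhp_bijOn hp).mapsTo hb), arsinhp_sinhp hp ha, arsinhp_sinhp hp hb]

lemma continuousAt_sinhp (hp : 1 ≤ p) {x : ℝ} (hx : 0 < x) : ContinuousAt (sinhp p) x :=
  continuousAt_of_monotoneOn_of_image_mem_nhds (sinhp_monotoneOn hp) (Ici_mem_nhds hx)
    (by rw [(sinhp_bijOn hp).image_eq]; exact Ici_mem_nhds (sinhp_pos hp hx))

lemma hasDerivAt_sinhp (hp : 1 ≤ p) {x : ℝ} (hx : 0 < x) :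
    HasDerivAt (sinhp p) (coshp p x) x := by
  have hs := sinhp_nonneg hp hx.le
  have hd := (hasDerivAt_arsinhp (zero_le_one.trans hp) (sinhp_pos hp hx)).of_local_left_inverse
    (continuousAt_sinhp hp hx) (by positivity)
    (eventually_of_mem (Ioi_mem_nhds hx) fun y hy => arsinhp_sinhp hp (le_of_lt hy))
  rwa [rpow_neg (by positivity), inv_inv] at hd

lemma abs_coshp_rpow_sub_abs_sinhp_rpow (hp : p ≠ 0) {x : ℝ} (hs : 0 ≤ sinhp p x) :
    |coshp p x| ^ p - |sinhp p x| ^ p = 1 := by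
  have hbase : 0 ≤ 1 + sinhp p x ^ p := by positivity
  rw [abs_of_nonneg (by unfold coshp; positivity), abs_of_nonneg hs, coshp, one_div,
    rpow_inv_rpow hbase hp, add_sub_cancel_right]

end Sinhp

theorem stmt_19 (p : ℝ) (hp : 1 < p) :
    (∀ x : ℝ, 0 < x →
      HasDerivAt (sinhp p) (coshp p x) x ∧ coshp p x = (1 + sinhp p x ^ p) ^ (1/p : ℝ)) ∧
    (∀ x : ℝ, 0 ≤ x → |coshp p x| ^ p - |sinhp p x| ^ p = 1) :=
  ⟨fun _ hx => ⟨hasDerivAt_sinhp hp.le hx, rfl⟩,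
    fun _ hx => abs_coshp_rpow_sub_abs_sinhp_rpow (by positivity) (sinhp_nonneg hp.le hx)⟩
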